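/- arXiv:1908.03715 — 3 statements merged into one kernel-verified Lean document; each statement's English description precedes it below -/
import Mathlib

section
/- Sequential composition: if mechanisms M₁, ..., M_r with independent randomness satisfy ε₁-DP, ..., ε_r-DP respectively, then the mechanism releasing the tuple (M₁(D), ..., M_r(D)) satisfies (ε₁ + ⋯ + ε_r)-DP. -/
/-!
Each ε-DP guarantee is an inequality of measures `M i D ≤ exp (ε i) • M i D'`. The product
measure is monotone in each factor and pulls finite scalars out of each factor, so
`pi (M · D) ≤ (∏ i, exp (ε i)) • pi (M · D')`, and `∏ i, exp (ε i) = exp (∑ i, ε i)`.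
-/

open MeasureTheory

namespace MeasureTheory.Measure

variable {ι : Type*} [Fintype ι] {α : ι → Type*} [∀ i, MeasurableSpace (α i)]

theorem pi_mono {μ ν : ∀ i, Measure (α i)} (h : ∀ i, μ i ≤ ν i) :
    Measure.pi μ ≤ Measure.pi ν := by
  refine le_iff.2 fun S hS => ?_
  have hle : OuterMeasure.pi (fun i => (μ i).toOuterMeasure) ≤
      OuterMeasure.pi (fun i => (ν i).toOuterMeasure) :=
    OuterMeasure.le_pi.2 fun s _ =>
      (OuterMeasure.pi_pi_le _ s).trans (Finset.prod_le_prod' fun i _ => h i (s i))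
  rw [Measure.pi, Measure.pi, toMeasure_apply _ _ hS, toMeasure_apply _ _ hS]
  exact hle S

theorem pi_smul (μ : ∀ i, Measure (α i)) [∀ i, SigmaFinite (μ i)] (c : ι → NNReal) :
    Measure.pi (fun i => c i • μ i) = (∏ i, c i) • Measure.pi μ := by
  refine pi_eq fun s _ => ?_
  simp only [coe_nnreal_smul_apply, pi_pi, Finset.prod_mul_distrib, ENNReal.ofNNReal_finsetProd]

theorem pi_le_prod_smul_pi {μ ν : ∀ i, Measure (α i)} [∀ i, SigmaFinite (ν i)]
    {c : ι → NNReal} (h : ∀ i, μ i ≤ c i • ν i) :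
    Measure.pi μ ≤ (∏ i, c i) • Measure.pi ν :=
  pi_smul ν c ▸ pi_mono h

end MeasureTheory.Measure

theorem dp_sequential_composition {Db : Type*} {r : ℕ}
    {Ω : Fin r → Type*} [∀ i, MeasurableSpace (Ω i)]
    (Neighbor : Db → Db → Prop) (ε : Fin r → ℝ)
    (M : ∀ i : Fin r, Db → Measure (Ω i))
    (hprob : ∀ i D, IsProbabilityMeasure (M i D))
    (hDP : ∀ i, ∀ D D', Neighbor D D' → ∀ S : Set (Ω i), MeasurableSet S →
      M i D S ≤ ENNReal.ofReal (Real.exp (ε i)) * M i D' S) :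
    ∀ D D', Neighbor D D' → ∀ S : Set (∀ i, Ω i), MeasurableSet S →
      Measure.pi (fun i => M i D) S ≤
        ENNReal.ofReal (Real.exp (∑ i, ε i)) * Measure.pi (fun i => M i D') S := by
  intro D D' hN S _
  have hle : ∀ i, M i D ≤ (Real.exp (ε i)).toNNReal • M i D' := fun i =>
    Measure.le_iff.2 (hDP i D D' hN)
  have hexp : ENNReal.ofReal (Real.exp (∑ i, ε i)) = ↑(∏ i, (Real.exp (ε i)).toNNReal) := by
    rw [Real.exp_sum, ENNReal.ofReal, Real.toNNReal_prod_of_nonneg fun i _ => (Real.exp_pos _).le]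
  rw [hexp]
  exact Measure.pi_le_prod_smul_pi hle S
end

section
/- Exponential mechanism privacy: given a utility function q : D × R → ℝ over a finite range R with sensitivity Δq = max_{r} max_{neighboring D₁,D₂} |q(D₁,r) − q(D₂,r)|, the mechanism that outputs r with probability proportional to exp(ε·q(D,r)/(2Δq)) satisfies ε-DP. -/
/-!
Shifting every score by at most `c` changes each weight `exp (f r)` by a factor at most `exp c`
and hence the normalising sum by a factor at least `exp (-c)`, so each softmax probability
changes by a factor at most `exp (2 c)`. With the scores `ε q(D, r) / (2Δq)` of neighbouring
databases we have `c = ε / 2`, which gives the bound `exp ε` for each outcome, and summing over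
`S` gives it for every event.
-/

open Finset Real

noncomputable def softmax {R : Type*} [Fintype R] (f : R → ℝ) (r : R) : ℝ :=
  exp (f r) / ∑ r', exp (f r')

theorem exp_le_exp_mul_exp_of_le_add {x y c : ℝ} (h : x ≤ y + c) : exp x ≤ exp c * exp y := by
  rw [← exp_add, add_comm c]
  exact exp_le_exp.mpr h

theorem sum_exp_le_exp_mul_sum_exp {ι : Type*} (s : Finset ι) {f g : ι → ℝ} {c : ℝ}
    (h : ∀ i ∈ s, f i ≤ g i + c) : ∑ i ∈ s, exp (f i) ≤ exp c * ∑ i ∈ s, exp (g i) := by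
  rw [mul_sum]
  exact sum_le_sum fun i hi => exp_le_exp_mul_exp_of_le_add (h i hi)

theorem softmax_le_exp_mul_softmax {R : Type*} [Fintype R] {f g : R → ℝ} {c : ℝ}
    (hfg : ∀ r, |f r - g r| ≤ c) (r : R) : softmax f r ≤ exp (2 * c) * softmax g r := by
  have hf_le : ∀ r, f r ≤ g r + c := fun r => by linarith [(abs_le.mp (hfg r)).2]
  have hg_le : ∀ r, g r ≤ f r + c := fun r => by linarith [(abs_le.mp (hfg r)).1]
  have hne : (univ : Finset R).Nonempty := ⟨r, mem_univ r⟩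
  have hf_pos : 0 < ∑ r', exp (f r') := sum_pos (fun _ _ => exp_pos _) hne
  have hg_pos : 0 < ∑ r', exp (g r') := sum_pos (fun _ _ => exp_pos _) hne
  have hweight : exp (f r) ≤ exp c * exp (g r) := exp_le_exp_mul_exp_of_le_add (hf_le r)
  have hnorm : ∑ r', exp (g r') ≤ exp c * ∑ r', exp (f r') :=
    sum_exp_le_exp_mul_sum_exp univ fun r _ => hg_le r
  unfold softmax
  rw [← mul_div_assoc, div_le_div_iff₀ hf_pos hg_pos]
  calc exp (f r) * ∑ r', exp (g r')
      ≤ (exp c * exp (g r)) * (exp c * ∑ r', exp (f r')) :=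
        mul_le_mul hweight hnorm hg_pos.le (by positivity)
    _ = exp (2 * c) * exp (g r) * ∑ r', exp (f r') := by
        rw [two_mul, exp_add]; ring

theorem exponential_mechanism_dp_general {Db R : Type*} [Fintype R]
    (Neighbor : Db → Db → Prop)
    (q : Db → R → ℝ) (Δq ε : ℝ) (hΔq : 0 < Δq) (hε : 0 < ε)
    (hsens : ∀ r : R, ∀ D₁ D₂, Neighbor D₁ D₂ → |q D₁ r - q D₂ r| ≤ Δq)
    (p : Db → R → ℝ)
    (hp : ∀ D r, p D r =
      Real.exp (ε * q D r / (2 * Δq)) / ∑ r' : R, Real.exp (ε * q D r' / (2 * Δq))) :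
    ∀ D D', Neighbor D D' → ∀ S : Finset R,
      ∑ r ∈ S, p D r ≤ Real.exp ε * ∑ r ∈ S, p D' r := by
  intro D D' hN S
  have hp_softmax : ∀ D, p D = softmax fun r => ε * q D r / (2 * Δq) :=
    fun D => funext (hp D)
  have hscore : ∀ r, |ε * q D r / (2 * Δq) - ε * q D' r / (2 * Δq)| ≤ ε / 2 := fun r => by
    have hscale : 0 < ε / (2 * Δq) := by positivity
    calc |ε * q D r / (2 * Δq) - ε * q D' r / (2 * Δq)|
        = |ε / (2 * Δq) * (q D r - q D' r)| := by congr 1; ring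
      _ = ε / (2 * Δq) * |q D r - q D' r| := by rw [abs_mul, abs_of_pos hscale]
      _ ≤ ε / (2 * Δq) * Δq := by gcongr; exact hsens r D D' hN
      _ = ε / 2 := by field_simp
  have hpoint : ∀ r, p D r ≤ exp ε * p D' r := fun r => by
    simpa only [hp_softmax, mul_div_cancel₀ ε two_ne_zero] using
      softmax_le_exp_mul_softmax hscore r
  rw [mul_sum]
  exact sum_le_sum fun r _ => hpoint r

theorem exponential_mechanism_dp {Db R : Type*} [Fintype R] [Nonempty R]
    (Neighbor : Db → Db → Prop)
    (hsymm : ∀ D D', Neighbor D D' → Neighbor D' D)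
    (q : Db → R → ℝ) (Δq ε : ℝ) (hΔq : 0 < Δq) (hε : 0 < ε)
    (hsens : ∀ r : R, ∀ D₁ D₂, Neighbor D₁ D₂ → |q D₁ r - q D₂ r| ≤ Δq)
    (p : Db → R → ℝ)
    (hp : ∀ D r, p D r =
      Real.exp (ε * q D r / (2 * Δq)) / ∑ r' : R, Real.exp (ε * q D r' / (2 * Δq))) :
    ∀ D D', Neighbor D D' → ∀ S : Finset R,
      ∑ r ∈ S, p D r ≤ Real.exp ε * ∑ r ∈ S, p D' r :=
  exponential_mechanism_dp_general Neighbor q Δq ε hΔq hε hsens p hp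
end

section
/- Sensitivity of the time-division utility function: let U(i,j) = log_α(j−i+1) · (aveDis/simVar) with 1 ≤ i ≤ j ≤ S and α > 1, where aveDis is the average of L1 distances between adjacent histograms in [i,j] and simVar ≥ 1. If moving to a neighboring dataset changes each adjacent-time L1 distance by at most 2 (hence changes aveDis by at most 2) while simVar ≥ 1 holds for both datasets, and 0 ≤ aveDis, then |U(i,j) − U'(i,j)| ≤ 2·log_α(S) whenever simVar is unchanged. -/
theorem utility_function_sensitivity (α : ℝ) (hα : 1 < α)
    (S i j : ℕ) (hij : i ≤ j) (hS : j - i + 1 ≤ S)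
    (aveDis aveDis' simVar : ℝ)
    (hvar : 1 ≤ simVar)
    (h0 : 0 ≤ aveDis) (h0' : 0 ≤ aveDis')
    (hdiff : |aveDis - aveDis'| ≤ 2) :
    |Real.logb α ((j : ℝ) - i + 1) * (aveDis / simVar) -
      Real.logb α ((j : ℝ) - i + 1) * (aveDis' / simVar)| ≤ 2 * Real.logb α S := by
  have hij' : (i : ℝ) ≤ j := by exact_mod_cast hij
  have hn1 : (1 : ℝ) ≤ (j : ℝ) - i + 1 := by linarith
  have hnS : (j : ℝ) - i + 1 ≤ (S : ℝ) := by
    have : ((j - i + 1 : ℕ) : ℝ) ≤ (S : ℝ) := by exact_mod_cast hS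
    rw [Nat.cast_add, Nat.cast_sub hij] at this
    simpa using this
  have hlog0 : 0 ≤ Real.logb α ((j : ℝ) - i + 1) :=
    Real.logb_nonneg hα hn1
  have hlogS : Real.logb α ((j : ℝ) - i + 1) ≤ Real.logb α S :=
    Real.logb_le_logb_of_le hα (by linarith) hnS
  have hv0 : (0 : ℝ) < simVar := lt_of_lt_of_le one_pos hvar
  have key : |aveDis / simVar - aveDis' / simVar| ≤ 2 := by
    rw [div_sub_div_same, abs_div, abs_of_pos hv0]
    calc |aveDis - aveDis'| / simVar ≤ |aveDis - aveDis'| / 1 :=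
          div_le_div_of_nonneg_left (abs_nonneg _) one_pos hvar
      _ = |aveDis - aveDis'| := div_one _
      _ ≤ 2 := hdiff
  rw [← mul_sub, abs_mul, abs_of_nonneg hlog0]
  calc Real.logb α ((j : ℝ) - i + 1) * |aveDis / simVar - aveDis' / simVar|
      ≤ Real.logb α ((j : ℝ) - i + 1) * 2 :=
        mul_le_mul_of_nonneg_left key hlog0
    _ ≤ Real.logb α S * 2 := mul_le_mul_of_nonneg_right hlogS (by norm_num)
    _ = 2 * Real.logb α S := mul_comm _ _
end
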